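/- arXiv:2412.17330 — 3 statements merged into one kernel-verified Lean document; each statement's English description precedes it below -/
import Mathlib

section
/- Let G be a tree grammar with finitely many nonterminals and finitely many rules, and cost function with cost(r) > 0 for every rule r. Let X be a nonterminal and p a program generated from X. If there exists a program q generated from X with cost(q) > cost(p), then p has a successor wrt X, i.e., there exists a program p' generated from X with cost(p') > cost(p) such that no program p'' generated from X satisfies cost(p) < cost(p'') < cost(p'). -/
/-- Finitely-branching trees with nodes labeled by elements of `R` (derivation trees). -/
inductive Tree' (R : Type) : Type
  | node : R → List (Tree' R) → Tree' R

/-- The label of the root node. -/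
def Tree'.rootLabel {R : Type} : Tree' R → R
  | .node r _ => r

/-- A tree grammar: nonterminals `Γ`, derivation rules `R`, each rule having a
left-hand nonterminal and a list of argument nonterminals. -/
structure TreeGrammar where
  Γ : Type
  R : Type
  lhs : R → Γ
  args : R → List Γ

/-- Well-formed derivation trees (programs) of a tree grammar. -/
inductive TreeGrammar.WF (G : TreeGrammar) : Tree' G.R → Prop
  | node (r : G.R) (ts : List (Tree' G.R))
      (hlen : ts.length = (G.args r).length)
      (hwf : ∀ t ∈ ts, G.WF t)
      (hlhs : ∀ i : ℕ, (h : i < ts.length) →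
        G.lhs (ts[i].rootLabel) = (G.args r)[i]'(hlen ▸ h)) :
      G.WF (Tree'.node r ts)

/-- `p` is a program generated from the nonterminal `X`. -/
def TreeGrammar.GenFrom (G : TreeGrammar) (X : G.Γ) (p : Tree' G.R) : Prop :=
  G.WF p ∧ G.lhs p.rootLabel = X

/-- The cost of a program, extending a cost function on rules. -/
def costP {R : Type} (cost : R → ℝ) : Tree' R → ℝ
  | .node r ts => cost r + (ts.attach.map (fun t => costP cost t.1)).sum
decreasing_by
  have := List.sizeOf_lt_of_mem t.2
  simp only [Tree'.node.sizeOf_spec]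
  omega

/-- The number of nodes of a derivation tree. -/
def sizeP {R : Type} : Tree' R → ℕ
  | .node _ ts => 1 + (ts.attach.map (fun t => sizeP t.1)).sum
decreasing_by
  have := List.sizeOf_lt_of_mem t.2
  simp only [Tree'.node.sizeOf_spec]
  omega

/-- The depth of a derivation tree: number of nodes on a longest root-to-leaf path. -/
def depthP {R : Type} : Tree' R → ℕ
  | .node _ ts => 1 + (ts.attach.map (fun t => depthP t.1)).foldr max 0
decreasing_by
  have := List.sizeOf_lt_of_mem t.2
  simp only [Tree'.node.sizeOf_spec]
  omega

/-- `p'` is a successor of `p` with respect to the nonterminal `X`: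
`p'` is generated from `X`, has strictly larger cost than `p`, and no program
generated from `X` has cost strictly between the two. -/
def IsSucc (G : TreeGrammar) (cost : G.R → ℝ) (X : G.Γ) (p p' : Tree' G.R) : Prop :=
  G.GenFrom X p' ∧ costP cost p < costP cost p' ∧
    ∀ p'', G.GenFrom X p'' →
      ¬(costP cost p < costP cost p'' ∧ costP cost p'' < costP cost p')

/-- `X` occurs as the left-hand nonterminal of the rule labeling some node of the tree. -/
inductive OccursLhs (G : TreeGrammar) (X : G.Γ) : Tree' G.R → Prop
  | here (r : G.R) (ts : List (Tree' G.R)) : G.lhs r = X → OccursLhs G X (.node r ts)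
  | there (r : G.R) (ts : List (Tree' G.R)) (t : Tree' G.R) :
      t ∈ ts → OccursLhs G X t → OccursLhs G X (.node r ts)

/-- Condition (*): along every root-to-leaf path, no nonterminal occurs twice as the
left-hand nonterminal of the rules labeling the nodes on the path. -/
inductive StarCond (G : TreeGrammar) : Tree' G.R → Prop
  | node (r : G.R) (ts : List (Tree' G.R))
      (hsub : ∀ t ∈ ts, StarCond G t)
      (hnew : ∀ t ∈ ts, ¬ OccursLhs G (G.lhs r) t) :
      StarCond G (.node r ts)

/-- `IsSubtree s t`: `s` is the subtree of `t` rooted at some node of `t`. -/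
inductive IsSubtree {R : Type} : Tree' R → Tree' R → Prop
  | refl (t : Tree' R) : IsSubtree t t
  | child (s : Tree' R) (r : R) (ts : List (Tree' R)) (t : Tree' R) :
      t ∈ ts → IsSubtree s t → IsSubtree s (.node r ts)

/-- `IsStrictSubtree s t`: `s` is the subtree of `t` rooted at a strict descendant
of the root of `t`. -/
inductive IsStrictSubtree {R : Type} : Tree' R → Tree' R → Prop
  | child (s : Tree' R) (r : R) (ts : List (Tree' R)) (t : Tree' R) :
      t ∈ ts → IsSubtree s t → IsStrictSubtree s (.node r ts)

/-- The subtree of a tree at a given position (a list of child indices), if it exists. -/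
def subtreeAt {R : Type} : Tree' R → List ℕ → Option (Tree' R)
  | t, [] => some t
  | .node _ ts, i :: is =>
      match ts[i]? with
      | some t => subtreeAt t is
      | none => none

/-- Replacing the subtree at a given position by `q`. -/
def replaceAt {R : Type} : Tree' R → List ℕ → Tree' R → Tree' R
  | _, [], q => q
  | .node r ts, i :: is, q =>
      match ts[i]? with
      | some t => .node r (ts.set i (replaceAt t is q))
      | none => .node r ts

open scoped ENNReal in
/-- The Bellman operator associated with a tree grammar and a cost function. -/
noncomputable def bellman (G : TreeGrammar) (cost : G.R → ℝ) (c : G.Γ → ℝ≥0∞) : G.Γ → ℝ≥0∞ :=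
  fun X => ⨅ r ∈ {r : G.R | G.lhs r = X},
    (ENNReal.ofReal (cost r) + ((G.args r).map c).sum)

/-- Every tree has at least one node. -/
lemma one_le_sizeP {R : Type} (q : Tree' R) : 1 ≤ sizeP q := by
  cases q with
  | node r ts => rw [sizeP]; exact Nat.le_add_right 1 _

/-- A uniform positive lower bound on rule costs gives a lower bound on tree costs
in terms of the number of nodes. -/
lemma costP_ge_size {R : Type} (cost : R → ℝ) (ε : ℝ) (hε : 0 ≤ ε)
    (h : ∀ r, ε ≤ cost r) : ∀ q : Tree' R, ε * (sizeP q : ℝ) ≤ costP cost q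
  | .node r ts => by
    rw [costP, sizeP]
    have key : ε * ((ts.attach.map fun t => sizeP t.1).sum : ℝ)
        ≤ (ts.attach.map fun t => costP cost t.1).sum := by
      rw [Nat.cast_list_sum, List.map_map, ← List.sum_map_mul_left]
      exact List.sum_le_sum fun t _ => costP_ge_size cost ε hε h t.1
    rw [Nat.cast_add, Nat.cast_one, mul_add, mul_one]
    exact add_le_add (h r) key
decreasing_by
  have := List.sizeOf_lt_of_mem t.2
  simp only [Tree'.node.sizeOf_spec]
  omega

/-- Well-formed trees of bounded size form a finite set. -/
lemma wf_size_finite (G : TreeGrammar) [Fintype G.R] :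
    ∀ N : ℕ, {q : Tree' G.R | G.WF q ∧ sizeP q ≤ N}.Finite := by
  intro N
  induction N with
  | zero =>
      convert Set.finite_empty
      ext q
      simp only [Set.mem_setOf_eq, Set.mem_empty_iff_false, iff_false, not_and]
      intro _
      have := one_le_sizeP q
      omega
  | succ N ih =>
      haveI : Finite ↥{q : Tree' G.R | G.WF q ∧ sizeP q ≤ N} := ih
      have hL : {l : List ↥{q : Tree' G.R | G.WF q ∧ sizeP q ≤ N} |
          l.length ≤ N + 1}.Finite := List.finite_length_le _ _
      have himg := ((Set.finite_univ (α := G.R)).prod hL).image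
        (fun pr => Tree'.node pr.1 (pr.2.map Subtype.val))
      refine himg.subset ?_
      rintro q ⟨hwf, hsize⟩
      cases q with
      | node r ts =>
        have hwf' : ∀ t ∈ ts, G.WF t := by cases hwf; assumption
        rw [sizeP] at hsize
        have hsum : (ts.attach.map fun t => sizeP t.1).sum ≤ N := by omega
        have hmemS : ∀ t ∈ ts, sizeP t ≤ N := by
          intro t ht
          refine le_trans ?_ hsum
          exact List.single_le_sum (fun _ _ => Nat.zero_le _) _
            (List.mem_map.mpr ⟨⟨t, ht⟩, List.mem_attach _ _, rfl⟩)
        have hlen : ts.length ≤ N + 1 := by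
          have h1 : ts.length = (ts.attach.map fun t => sizeP t.1).length := by
            simp
          have := List.length_le_sum_of_one_le (ts.attach.map fun t => sizeP t.1)
            (by rintro i hi
                obtain ⟨t, -, rfl⟩ := List.mem_map.mp hi
                exact one_le_sizeP _)
          omega
        refine ⟨⟨r, ts.attach.map fun t => ⟨t.1, hwf' t.1 t.2, hmemS t.1 t.2⟩⟩,
          ⟨Set.mem_univ _, ?_⟩, ?_⟩
        · simp only [Set.mem_setOf_eq, List.length_map, List.length_attach]
          exact hlen
        · simp [List.map_map]

/-- if some program generated from `X` has cost larger than `cost p`,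
then `p` has a successor wrt `X`. -/
theorem stmt5 (G : TreeGrammar) [Fintype G.Γ] [Fintype G.R] (cost : G.R → ℝ)
    (hpos : ∀ r, 0 < cost r) (X : G.Γ) (p : Tree' G.R) (hp : G.GenFrom X p)
    (hq : ∃ q : Tree' G.R, G.GenFrom X q ∧ costP cost p < costP cost q) :
    ∃ p' : Tree' G.R, IsSucc G cost X p p' := by
  obtain ⟨q, hqgen, hqcost⟩ := hq
  haveI : Nonempty G.R := ⟨q.rootLabel⟩
  set ε : ℝ := Finset.univ.inf' Finset.univ_nonempty cost with hεdef
  have hε0 : 0 < ε := by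
    rw [hεdef, Finset.lt_inf'_iff]
    exact fun r _ => hpos r
  have hεle : ∀ r, ε ≤ cost r := fun r => Finset.inf'_le _ (Finset.mem_univ r)
  set C : ℝ := costP cost q with hCdef
  set N : ℕ := ⌈C / ε⌉₊ with hNdef
  -- the candidate set
  set A : Set (Tree' G.R) :=
    {q' | G.GenFrom X q' ∧ costP cost p < costP cost q' ∧ costP cost q' ≤ C} with hAdef
  have hAfin : A.Finite := by
    refine (wf_size_finite G N).subset ?_
    rintro q' ⟨⟨hwf, -⟩, -, hle⟩
    refine ⟨hwf, ?_⟩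
    have h1 : ε * (sizeP q' : ℝ) ≤ C := le_trans (costP_ge_size cost ε hε0.le hεle q') hle
    have h2 : (sizeP q' : ℝ) ≤ C / ε := (le_div_iff₀ hε0).mpr (by linarith [h1])
    have h3 : (sizeP q' : ℝ) ≤ (N : ℝ) := h2.trans (Nat.le_ceil _)
    exact_mod_cast h3
  have hAne : A.Nonempty := ⟨q, hqgen, hqcost, le_refl _⟩
  obtain ⟨p', hp'A, hp'min⟩ := Set.exists_min_image A (costP cost) hAfin hAne
  obtain ⟨hp'gen, hp'gt, hp'le⟩ := hp'A
  refine ⟨p', hp'gen, hp'gt, ?_⟩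
  rintro p'' hgen'' ⟨h1, h2⟩
  have : p'' ∈ A := ⟨hgen'', h1, le_trans h2.le hp'le⟩
  exact absurd (hp'min p'' this) (not_le.mpr h2)
end

section
/- Let G be a tree grammar with finitely many nonterminals and finitely many rules, and cost function with cost(r) > 0 for every rule r. Then for every nonterminal X, if at least one program is generated from X, there exists a program generated from X of minimal cost, i.e., a program p₀ generated from X such that cost(p₀) ≤ cost(p) for every program p generated from X. -/
/-!
If every rule costs at least `ε > 0`, a program of cost at most `C` has at most `C / ε` nodes,
hence depth at most `C / ε`; as the arities are bounded, there are only finitely many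
well-formed trees of bounded depth. So every sublevel set of the cost is finite (the cost is
a Northcott function on programs), and the cost attains its minimum on any nonempty set of
programs.
-/

@[induction_eliminator]
theorem Tree'.induction {R : Type} {motive : Tree' R → Prop}
    (node : ∀ r ts, (∀ t ∈ ts, motive t) → motive (.node r ts)) (t : Tree' R) : motive t :=
  match t with
  | .node r ts => node r ts fun t _ => Tree'.induction node t
decreasing_by
  have := List.sizeOf_lt_of_mem ‹t ∈ ts›
  simp only [Tree'.node.sizeOf_spec]
  omega

theorem depthP_le_sizeP {R : Type} (t : Tree' R) : depthP t ≤ sizeP t := by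
  induction t with
  | node r ts ih =>
    rw [depthP, sizeP]
    have : (ts.attach.map fun t => depthP t.1).foldr max 0 ≤
        (ts.attach.map fun t => sizeP t.1).sum :=
      List.max_le_of_forall_le _ _ fun d hd => by
        obtain ⟨t, -, rfl⟩ := List.mem_map.mp hd
        exact (ih t.1 t.2).trans (List.le_sum_of_mem (List.mem_map_of_mem (List.mem_attach _ t)))
    omega

theorem mul_sizeP_le_costP {R : Type} {cost : R → ℝ} {ε : ℝ} (hε : ∀ r, ε ≤ cost r)
    (t : Tree' R) : ε * sizeP t ≤ costP cost t := by
  induction t with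
  | node r ts ih =>
    rw [costP, sizeP]
    push_cast
    rw [mul_add, mul_one, List.map_map, ← List.sum_map_mul_left]
    exact add_le_add (hε r) (List.sum_le_sum fun t _ => ih t.1 t.2)

theorem Set.Finite.setOf_length_le_forall_mem {α : Type*} {s : Set α} (hs : s.Finite) (n : ℕ) :
    {l : List α | l.length ≤ n ∧ ∀ x ∈ l, x ∈ s}.Finite := by
  have := hs.to_subtype
  refine ((List.finite_length_le s n).image (List.map Subtype.val)).subset ?_
  rintro l ⟨hlen, hmem⟩
  lift l to List s using hmem
  exact ⟨l, by simpa using hlen, rfl⟩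

theorem TreeGrammar.finite_wf_depthP_le (G : TreeGrammar) [Finite G.R] (n : ℕ) :
    {p : Tree' G.R | G.WF p ∧ depthP p ≤ n}.Finite := by
  induction n with
  | zero =>
    refine Set.finite_empty.subset fun p ⟨_, hp⟩ => ?_
    cases p
    rw [depthP] at hp
    omega
  | succ n ih =>
    have := Fintype.ofFinite G.R
    set A := Finset.univ.sup fun r => (G.args r).length
    have hchildren := ih.setOf_length_le_forall_mem A
    refine ((Set.finite_univ.prod hchildren).image fun q => Tree'.node q.1 q.2).subset ?_
    rintro ⟨r, ts⟩ ⟨⟨_, _, hlen, hwf, -⟩, hdepth⟩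
    refine ⟨(r, ts), ⟨trivial, ?_, fun t ht => ⟨hwf t ht, ?_⟩⟩, rfl⟩
    · exact hlen ▸ Finset.le_sup (f := fun r => (G.args r).length) (Finset.mem_univ r)
    · rw [depthP] at hdepth
      have : depthP t ≤ _ := List.le_max_of_le' 0 (List.mem_map_of_mem (f := fun t => depthP t.1)
        (List.mem_attach ts ⟨t, ht⟩)) le_rfl
      omega

theorem exists_pos_forall_le_of_pos {ι : Type*} [Finite ι] {f : ι → ℝ}
    (hf : ∀ i, 0 < f i) : ∃ ε > 0, ∀ i, ε ≤ f i := by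
  cases isEmpty_or_nonempty ι
  · exact ⟨1, one_pos, isEmptyElim⟩
  · obtain ⟨i₀, hi₀⟩ := Finite.exists_min f
    exact ⟨f i₀, hf i₀, hi₀⟩

theorem TreeGrammar.northcott_costP (G : TreeGrammar) [Finite G.R] {cost : G.R → ℝ}
    (hpos : ∀ r, 0 < cost r) : Northcott fun p : {p // G.WF p} => costP cost p.1 where
  finite_le C := by
    obtain ⟨ε, hε, hεle⟩ := exists_pos_forall_le_of_pos hpos
    refine (G.finite_wf_depthP_le ⌈C / ε⌉₊).preimage Subtype.val_injective.injOn |>.subset ?_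
    rintro ⟨p, hwf⟩ (hp : costP cost p ≤ C)
    refine ⟨hwf, Nat.cast_le.mp ((le_div_iff₀' hε).mpr ?_ |>.trans (Nat.le_ceil _))⟩
    calc ε * depthP p ≤ ε * sizeP p := by gcongr; exact_mod_cast depthP_le_sizeP p
      _ ≤ costP cost p := mul_sizeP_le_costP hεle p
      _ ≤ C := hp

theorem stmt6_general (G : TreeGrammar) [Fintype G.R] (cost : G.R → ℝ)
    (hpos : ∀ r, 0 < cost r) (X : G.Γ) (hne : ∃ p : Tree' G.R, G.GenFrom X p) :
    ∃ p₀ : Tree' G.R, G.GenFrom X p₀ ∧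
      ∀ p : Tree' G.R, G.GenFrom X p → costP cost p₀ ≤ costP cost p := by
  have := G.northcott_costP hpos
  obtain ⟨p, hwf, hX⟩ := hne
  obtain ⟨⟨p₀, hwf₀⟩, hX₀, hmin⟩ := Northcott.exists_min_image
    (fun p : {p // G.WF p} => costP cost p.1) {p | G.lhs p.1.rootLabel = X} ⟨⟨p, hwf⟩, hX⟩
  exact ⟨p₀, ⟨hwf₀, hX₀⟩, fun p hp => hmin ⟨p, hp.1⟩ hp.2⟩

/-- if some program is generated from `X`, then there is a program
generated from `X` of minimal cost. -/
theorem stmt6 (G : TreeGrammar) [Fintype G.Γ] [Fintype G.R] (cost : G.R → ℝ)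
    (hpos : ∀ r, 0 < cost r) (X : G.Γ) (hne : ∃ p : Tree' G.R, G.GenFrom X p) :
    ∃ p₀ : Tree' G.R, G.GenFrom X p₀ ∧
      ∀ p : Tree' G.R, G.GenFrom X p → costP cost p₀ ≤ costP cost p :=
  stmt6_general G cost hpos X hne
end

section
/- Let G be a tree grammar with finitely many nonterminals and finitely many rules, and cost function with cost(r) > 0 for every rule r. Let X be a nonterminal from which at least one program is generated. Then there exists a minimal-cost program p₀ generated from X that satisfies condition (*): no nonterminal occurs twice along any root-to-leaf path of p₀; in particular, the depth of p₀ (the number of nodes on a longest root-to-leaf path) is at most the number of nonterminals of G. -/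
namespace Tree'

variable {R : Type}

@[elab_as_elim]
theorem node_induction {P : Tree' R → Prop}
    (node : ∀ r ts, (∀ t ∈ ts, P t) → P (.node r ts)) : ∀ t, P t
  | .node r ts => node r ts fun t _ => node_induction node t

end Tree'

section Measures

variable {R : Type}

@[simp]
lemma costP_node (cost : R → ℝ) (r : R) (ts : List (Tree' R)) :
    costP cost (.node r ts) = cost r + (ts.map (costP cost)).sum := by
  simp [costP]

@[simp]
lemma depthP_node (r : R) (ts : List (Tree' R)) :
    depthP (.node r ts) = 1 + (ts.map depthP).foldr max 0 := by
  simp [depthP]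

variable {cost : R → ℝ}

lemma costP_nonneg (hcost : ∀ r, 0 ≤ cost r) (t : Tree' R) : 0 ≤ costP cost t := by
  induction t using Tree'.node_induction with
  | node r ts ih =>
    rw [costP_node]
    exact add_nonneg (hcost r) (List.sum_nonneg (by simpa using ih))

lemma costP_le_costP_node (hcost : ∀ r, 0 ≤ cost r) {r : R} {ts : List (Tree' R)}
    {t : Tree' R} (ht : t ∈ ts) : costP cost t ≤ costP cost (.node r ts) := by
  have := List.single_le_sum (by simpa using fun t _ => costP_nonneg hcost t) _
    (List.mem_map_of_mem (f := costP cost) ht)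
  rw [costP_node]
  linarith [hcost r]

lemma IsSubtree.costP_le (hcost : ∀ r, 0 ≤ cost r) {s t : Tree' R} (h : IsSubtree s t) :
    costP cost s ≤ costP cost t := by
  induction h with
  | refl => exact le_rfl
  | child _ _ _ ht _ ih => exact ih.trans (costP_le_costP_node hcost ht)

end Measures

section Occurrences

variable {G : TreeGrammar} {s t : Tree' G.R}

lemma TreeGrammar.WF.of_isSubtree (hwf : G.WF t) (h : IsSubtree s t) : G.WF s := by
  induction h with
  | refl => exact hwf
  | child _ _ _ ht _ ih =>
    cases hwf with
    | node _ _ _ hwf _ => exact ih (hwf _ ht)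

lemma OccursLhs.exists_isSubtree {Y : G.Γ} (h : OccursLhs G Y t) :
    ∃ s, IsSubtree s t ∧ G.lhs s.rootLabel = Y := by
  induction h with
  | here r ts hr => exact ⟨.node r ts, .refl _, hr⟩
  | there r ts t ht _ ih =>
    obtain ⟨s, hs, hsY⟩ := ih
    exact ⟨s, .child s r ts t ht hs, hsY⟩

lemma OccursLhs.of_isSubtree {Y : G.Γ} (hY : OccursLhs G Y s) (h : IsSubtree s t) :
    OccursLhs G Y t := by
  induction h with
  | refl => exact hY
  | child r ts t ht _ ih => exact .there r ts t ht ih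

end Occurrences

section Pruning

variable {G : TreeGrammar} {cost : G.R → ℝ}

/-- `occursLhs` is what lets pruned children be reassembled under a root whose nonterminal they
did not contain. -/
structure IsPruning (G : TreeGrammar) (cost : G.R → ℝ) (p p' : Tree' G.R) : Prop where
  wf : G.WF p'
  lhs_rootLabel : G.lhs p'.rootLabel = G.lhs p.rootLabel
  starCond : StarCond G p'
  costP_le : costP cost p' ≤ costP cost p
  occursLhs : ∀ Y, OccursLhs G Y p' → OccursLhs G Y p

lemma IsPruning.of_isSubtree (hcost : ∀ r, 0 ≤ cost r) {p q q' : Tree' G.R}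
    (h : IsPruning G cost q q') (hqp : IsSubtree q p)
    (hroot : G.lhs q.rootLabel = G.lhs p.rootLabel) : IsPruning G cost p q' where
  wf := h.wf
  lhs_rootLabel := h.lhs_rootLabel.trans hroot
  starCond := h.starCond
  costP_le := h.costP_le.trans (hqp.costP_le hcost)
  occursLhs Y hY := (h.occursLhs Y hY).of_isSubtree hqp

lemma IsPruning.node {r : G.R} {ts : List (Tree' G.R)} (hwf : G.WF (.node r ts))
    (hfresh : ∀ t ∈ ts, ¬ OccursLhs G (G.lhs r) t) {f : Tree' G.R → Tree' G.R}
    (hf : ∀ t ∈ ts, IsPruning G cost t (f t)) :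
    IsPruning G cost (.node r ts) (.node r (ts.map f)) where
  wf := by
    cases hwf with
    | node _ _ hlen hwf hlhs =>
      refine .node r _ (by simpa using hlen) (by simpa using fun t ht => (hf t ht).wf)
        fun i hi => ?_
      simp only [List.getElem_map]
      rw [(hf _ (List.getElem_mem _)).lhs_rootLabel]
      exact hlhs i (by simpa using hi)
  lhs_rootLabel := rfl
  starCond := .node r _ (by simpa using fun t ht => (hf t ht).starCond)
    (by simpa using fun t ht hocc => hfresh t ht ((hf t ht).occursLhs _ hocc))
  costP_le := by
    simp only [costP_node, List.map_map]
    gcongr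
    exact List.sum_le_sum fun t ht => (hf t ht).costP_le
  occursLhs := by
    rintro Y (⟨_, _, hY⟩ | ⟨_, _, t', ht', hY⟩)
    · exact .here r ts hY
    · obtain ⟨t, ht, rfl⟩ := List.mem_map.1 ht'
      exact .there r ts t ht ((hf t ht).occursLhs Y hY)

theorem exists_isPruning (hcost : ∀ r, 0 ≤ cost r) {p : Tree' G.R} (hp : G.WF p) :
    ∃ p', IsPruning G cost p p' := by
  -- Strengthened to all subtrees: a repeated nonterminal may send us arbitrarily deep.
  suffices ∀ p q, IsSubtree q p → G.WF q → ∃ q', IsPruning G cost q q' from this p p (.refl p) hp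
  intro p
  induction p using Tree'.node_induction with
  | node r ts ih =>
    rintro q (_ | ⟨_, _, t, ht, hq⟩) hwf
    · by_cases hfresh : ∀ t ∈ ts, ¬ OccursLhs G (G.lhs r) t
      · have : Nonempty (Tree' G.R) := ⟨.node r []⟩
        choose! f hf using fun t ht =>
          ih t ht t (.refl t) (hwf.of_isSubtree (.child t r ts t ht (.refl t)))
        exact ⟨_, .node hwf hfresh hf⟩
      · push Not at hfresh
        obtain ⟨t, ht, hocc⟩ := hfresh
        obtain ⟨q, hq, hqr⟩ := hocc.exists_isSubtree
        have hqp : IsSubtree q (.node r ts) := .child q r ts t ht hq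
        obtain ⟨q', hq'⟩ := ih t ht q hq (hwf.of_isSubtree hqp)
        exact ⟨q', hq'.of_isSubtree hcost hqp hqr⟩
    · exact ih t ht q hq hwf

end Pruning

section Depth

variable {G : TreeGrammar}

lemma StarCond.depthP_le_card {t : Tree' G.R} (h : StarCond G t) {S : Finset G.Γ}
    (hS : ∀ Y, OccursLhs G Y t → Y ∈ S) : depthP t ≤ S.card := by
  classical
  induction h generalizing S with
  | node r ts _ hfresh ih =>
    have hr : G.lhs r ∈ S := hS _ (.here r ts rfl)
    have hchild : ∀ t ∈ ts, depthP t ≤ (S.erase (G.lhs r)).card := fun t ht =>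
      ih t ht fun Y hY => Finset.mem_erase.2
        ⟨fun hYr => hfresh t ht (hYr ▸ hY), hS Y (.there r ts t ht hY)⟩
    rw [Finset.card_erase_of_mem hr] at hchild
    have : (ts.map depthP).foldr max 0 ≤ S.card - 1 :=
      List.max_le_of_forall_le _ _ (by simpa using hchild)
    have := Finset.card_pos.2 ⟨_, hr⟩
    rw [depthP_node]
    omega

lemma StarCond.depthP_le_card_univ [Fintype G.Γ] {t : Tree' G.R} (h : StarCond G t) :
    depthP t ≤ Fintype.card G.Γ :=
  h.depthP_le_card fun Y _ => Finset.mem_univ Y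

end Depth

lemma List.finite_setOf_length_eq_forall_mem {α : Type*} {s : Set α} (hs : s.Finite) (n : ℕ) :
    {l : List α | l.length = n ∧ ∀ x ∈ l, x ∈ s}.Finite := by
  refine ((Set.Finite.pi (t := fun _ : Fin n => s) fun _ => hs).image List.ofFn).subset ?_
  rintro l ⟨rfl, hl⟩
  exact ⟨fun i => l[i], fun i _ => hl _ (List.getElem_mem _), List.ofFn_getElem⟩

lemma TreeGrammar.finite_setOf_wf_depthP_le (G : TreeGrammar) [Finite G.R] (d : ℕ) :
    {t : Tree' G.R | G.WF t ∧ depthP t ≤ d}.Finite := by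
  induction d with
  | zero =>
    convert Set.finite_empty
    ext ⟨r, ts⟩
    simp
  | succ d ih =>
    refine (Set.finite_iUnion fun r : G.R => ((List.finite_setOf_length_eq_forall_mem ih
      (G.args r).length).image (Tree'.node r))).subset ?_
    rintro ⟨r, ts⟩ ⟨hwf, hd⟩
    cases hwf with
    | node _ _ hlen hwf _ =>
      refine Set.mem_iUnion.2 ⟨r, ts, ⟨hlen, fun t ht => ⟨hwf t ht, ?_⟩⟩, rfl⟩
      have : depthP t ≤ (ts.map depthP).foldr max 0 :=
        List.le_max_of_le (List.mem_map_of_mem ht) le_rfl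
      rw [depthP_node] at hd
      omega

/-- there is a minimal-cost program generated from `X` satisfying
condition (*), and in particular of depth at most the number of nonterminals. -/
theorem stmt7 (G : TreeGrammar) [Fintype G.Γ] [Fintype G.R] (cost : G.R → ℝ)
    (hpos : ∀ r, 0 < cost r) (X : G.Γ) (hne : ∃ p : Tree' G.R, G.GenFrom X p) :
    ∃ p₀ : Tree' G.R, G.GenFrom X p₀ ∧
      (∀ p : Tree' G.R, G.GenFrom X p → costP cost p₀ ≤ costP cost p) ∧
      StarCond G p₀ ∧ depthP p₀ ≤ Fintype.card G.Γ := by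
  set T := {p : Tree' G.R | G.GenFrom X p ∧ StarCond G p}
  have hT : T.Finite := (G.finite_setOf_wf_depthP_le (Fintype.card G.Γ)).subset
    fun p hp => ⟨hp.1.1, hp.2.depthP_le_card_univ⟩
  have hpruned : ∀ p, G.GenFrom X p → ∃ p' ∈ T, costP cost p' ≤ costP cost p := by
    rintro p ⟨hwf, hX⟩
    obtain ⟨p', hp'⟩ := exists_isPruning (fun r => (hpos r).le) hwf
    exact ⟨p', ⟨⟨hp'.wf, hp'.lhs_rootLabel.trans hX⟩, hp'.starCond⟩, hp'.costP_le⟩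
  obtain ⟨p, hp⟩ := hne
  obtain ⟨p', hp'T, -⟩ := hpruned p hp
  obtain ⟨p₀, hp₀, hmin⟩ := Set.exists_min_image T (costP cost) hT ⟨p', hp'T⟩
  refine ⟨p₀, hp₀.1, fun p hp => ?_, hp₀.2, hp₀.2.depthP_le_card_univ⟩
  obtain ⟨p', hp'T, hle⟩ := hpruned p hp
  exact (hmin p' hp'T).trans hle
end
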